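/- For the manifold N_{6+4p,ψ} with f = ψ(z_0) + z_1z_0² + ⋯ + z_pz_0^{p+1}, and for k ≥ p+1, the curvature operator satisfies: the only nonzero components of ∇^k𝓡 are (∇_{∂_{z_0}})^k 𝓡(∂_x,∂_{z_0})∂_{z_0} = ψ^{(k+2)}(z_0)·∂_{x*} and (∇_{∂_{z_0}})^k 𝓡(∂_x,∂_{z_0})∂_x = -ψ^{(k+2)}(z_0)·∂_{z*_0}. -/

import Mathlib

abbrev Idx (n : ℕ) := (Unit ⊕ Fin n) ⊕ (Unit ⊕ Fin n)
abbrev Pt (n : ℕ) := Idx n → ℝ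

def iX (n : ℕ) : Idx n := Sum.inl (Sum.inl ())
def iS (n : ℕ) (i : Fin n) : Idx n := Sum.inl (Sum.inr i)

def sPart {n : ℕ} (q : Pt n) : Fin n → ℝ := fun i => q (iS n i)

noncomputable def pd {n : ℕ} (a : Idx n) (h : Pt n → ℝ) (q : Pt n) : ℝ :=
  fderiv ℝ h q (Pi.single a 1)

noncomputable def pdS {n : ℕ} (i : Fin n) (h : (Fin n → ℝ) → ℝ) (s : Fin n → ℝ) : ℝ :=
  fderiv ℝ h s (Pi.single i 1)

/-- Iterated partial derivatives ∂_{ξ₁}⋯∂_{ξ_r} of a function of `s`. -/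
noncomputable def iterPdS {n : ℕ} (L : List (Fin n)) (h : (Fin n → ℝ) → ℝ) :
    (Fin n → ℝ) → ℝ :=
  L.foldr (fun i acc => pdS i acc) h

noncomputable def gmat {n : ℕ} (F : (Fin n → ℝ) → ℝ) (q : Pt n) : Matrix (Idx n) (Idx n) ℝ :=
  fun a b => match a, b with
    | Sum.inl (Sum.inl _), Sum.inl (Sum.inl _) => -2 * F (sPart q)
    | Sum.inl (Sum.inl _), Sum.inr (Sum.inl _) => 1
    | Sum.inr (Sum.inl _), Sum.inl (Sum.inl _) => 1
    | Sum.inl (Sum.inr i), Sum.inr (Sum.inr j) => if i = j then 1 else 0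
    | Sum.inr (Sum.inr i), Sum.inl (Sum.inr j) => if i = j then 1 else 0
    | _, _ => 0

noncomputable def Gamma2 {n : ℕ} (F : (Fin n → ℝ) → ℝ) (l i j : Idx n) (q : Pt n) : ℝ :=
  (1/2) * ∑ m : Idx n, (gmat F q)⁻¹ l m *
    (pd i (fun r => gmat F r j m) q + pd j (fun r => gmat F r i m) q
      - pd m (fun r => gmat F r i j) q)

/-- The Riemann curvature (0,4)-tensor: R(∂i,∂j,∂k,∂l) = g((∇_i∇_j - ∇_j∇_i)∂k, ∂l). -/
noncomputable def R4 {n : ℕ} (F : (Fin n → ℝ) → ℝ) (q : Pt n) (i j k l : Idx n) : ℝ :=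
  ∑ m : Idx n, gmat F q l m *
    (pd i (fun r => Gamma2 F m j k r) q - pd j (fun r => Gamma2 F m i k r) q
      + ∑ a : Idx n, (Gamma2 F m i a q * Gamma2 F a j k q - Gamma2 F m j a q * Gamma2 F a i k q))

/-- Covariant derivative of a (0,m)-tensor field; the new (differentiation) index
    is appended as the last slot. -/
noncomputable def covD {n m : ℕ} (F : (Fin n → ℝ) → ℝ) (T : Pt n → (Fin m → Idx n) → ℝ)
    (q : Pt n) (v : Fin (m+1) → Idx n) : ℝ :=
  pd (v (Fin.last m)) (fun r => T r (fun a => v a.castSucc)) q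
    - ∑ a : Fin m, ∑ l : Idx n,
        Gamma2 F l (v (Fin.last m)) (v a.castSucc) q *
          T q (Function.update (fun b => v b.castSucc) a l)

/-- The k-th covariant derivative ∇^k R, a (0, k+4)-tensor field. -/
noncomputable def covDIter {n : ℕ} (F : (Fin n → ℝ) → ℝ) :
    (k : ℕ) → Pt n → (Fin (k+4) → Idx n) → ℝ
  | 0 => fun q v => R4 F q (v 0) (v 1) (v 2) (v 3)
  | (k+1) => covD F (covDIter F k)


def zI (p : ℕ) (i : Fin (p+1)) : Fin (2+2*p) := ⟨i.val, by have := i.isLt; omega⟩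
def ztI (p : ℕ) (i : Fin (p+1)) : Fin (2+2*p) := ⟨p+1+i.val, by have := i.isLt; omega⟩

/-- F = ψ(z_0) + z_1z_0² + ⋯ + z_pz_0^{p+1} + Σ_i z_i z̃_i, defining N_{6+4p,ψ}. -/
noncomputable def FN (p : ℕ) (ψ : ℝ → ℝ) : (Fin (2+2*p) → ℝ) → ℝ :=
  fun s => ψ (s (zI p 0))
    + (∑ j : Fin (p+1), if 1 ≤ (j : ℕ) then s (zI p j) * (s (zI p 0)) ^ ((j : ℕ) + 1) else 0)
    + ∑ i : Fin (p+1), s (zI p i) * s (ztI p i)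

/-- Assemble the argument vector (i, j, kk, l; dirs) for ∇^k R. -/
def argv {n : ℕ} (k : ℕ) (i j kk l : Idx n) (dirs : Fin k → Idx n) : Fin (k+4) → Idx n :=
  fun a =>
    if h0 : a.val = 0 then i else if h1 : a.val = 1 then j else if h2 : a.val = 2 then kk
    else if h3 : a.val = 3 then l
    else dirs ⟨a.val - 4, by have := a.isLt; omega⟩

namespace S18
variable {n : ℕ}

/-- sPart as a continuous linear map. -/
noncomputable def sL (n : ℕ) : (Pt n) →L[ℝ] (Fin n → ℝ) :=
  ContinuousLinearMap.pi (fun i => ContinuousLinearMap.proj (iS n i))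

lemma sL_single (a : Idx n) :
    sL n (Pi.single a 1) = (match a with
      | Sum.inl (Sum.inr i) => Pi.single i 1
      | _ => 0) := by
  rcases a with (⟨⟩|i)|(⟨⟩|i) <;>
  · funext j
    simp [sL, ContinuousLinearMap.pi_apply, Pi.single_apply, iS]

/-- chain rule through sPart -/
lemma pd_comp_sPart (a : Idx n) (H : (Fin n → ℝ) → ℝ) (q : Pt n)
    (hH : DifferentiableAt ℝ H (sPart q)) :
    pd a (fun r => H (sPart r)) q
      = (match a with | Sum.inl (Sum.inr i) => pdS i H (sPart q) | _ => 0) := by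
  have he : (fun r => H (sPart r)) = H ∘ (sL n) := rfl
  have h1 : fderiv ℝ (fun r => H (sPart r)) q = (fderiv ℝ H (sPart q)).comp (sL n) := by
    rw [he]
    rw [fderiv_comp q (by exact hH) (sL n).differentiableAt, (sL n).fderiv]
    rfl
  rw [pd, h1]
  rcases a with (⟨⟩|i)|(⟨⟩|i) <;>
    simp only [ContinuousLinearMap.coe_comp', Function.comp_apply] <;>
    rw [show ((sL n) (Pi.single _ 1)) = _ from sL_single _] <;>
    simp [pdS]

lemma pd_const (a : Idx n) (c : ℝ) (q : Pt n) : pd a (fun _ => c) q = 0 := by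
  simp [pd, fderiv_const]

lemma pd_cmul_comp (a : Idx n) (c : ℝ) (H : (Fin n → ℝ) → ℝ) (q : Pt n)
    (hH : DifferentiableAt ℝ H (sPart q)) :
    pd a (fun r => c * H (sPart r)) q
      = c * (match a with | Sum.inl (Sum.inr i) => pdS i H (sPart q) | _ => 0) := by
  have hd : DifferentiableAt ℝ (fun r => H (sPart r)) q := by
    exact DifferentiableAt.comp q hH (sL n).differentiableAt
  have : pd a (fun r => c * H (sPart r)) q = c * pd a (fun r => H (sPart r)) q := by
    simp [pd, fderiv_const_mul hd]
  rw [this, pd_comp_sPart a H q hH]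

/-- contDiff of pdS -/
lemma contDiff_pdS {H : (Fin n → ℝ) → ℝ} (hH : ContDiff ℝ (⊤ : ℕ∞) H) (i : Fin n) :
    ContDiff ℝ (⊤ : ℕ∞) (pdS i H) := by
  exact (hH.fderiv_right (by simp)).clm_apply contDiff_const

lemma contDiff_iterPdS {H : (Fin n → ℝ) → ℝ} (hH : ContDiff ℝ (⊤ : ℕ∞) H) (L : List (Fin n)) :
    ContDiff ℝ (⊤ : ℕ∞) (iterPdS L H) := by
  induction L with
  | nil => exact hH
  | cons a L ih => exact contDiff_pdS ih a

lemma iterPdS_cons (a : Fin n) (L : List (Fin n)) (H : (Fin n → ℝ) → ℝ) :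
    iterPdS (a :: L) H = pdS a (iterPdS L H) := rfl

end S18
namespace S18
variable {n : ℕ}

def jX : Idx n := Sum.inl (Sum.inl ())
def jXs : Idx n := Sum.inr (Sum.inl ())
def jZ (i : Fin n) : Idx n := Sum.inl (Sum.inr i)
def jZs (i : Fin n) : Idx n := Sum.inr (Sum.inr i)

lemma sum_Idx (f : Idx n → ℝ) :
    ∑ m : Idx n, f m = f jX + (∑ i, f (jZ i)) + (f jXs + ∑ i, f (jZs i)) := by
  rw [Fintype.sum_sum_type, Fintype.sum_sum_type, Fintype.sum_sum_type]
  simp [jX, jXs, jZ, jZs]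

noncomputable def ginv (F : (Fin n → ℝ) → ℝ) (q : Pt n) : Matrix (Idx n) (Idx n) ℝ :=
  fun a b => match a, b with
    | Sum.inl (Sum.inl _), Sum.inr (Sum.inl _) => 1
    | Sum.inr (Sum.inl _), Sum.inl (Sum.inl _) => 1
    | Sum.inr (Sum.inl _), Sum.inr (Sum.inl _) => 2 * F (sPart q)
    | Sum.inl (Sum.inr i), Sum.inr (Sum.inr j) => if i = j then 1 else 0
    | Sum.inr (Sum.inr i), Sum.inl (Sum.inr j) => if i = j then 1 else 0
    | _, _ => 0

lemma gmat_inv (F : (Fin n → ℝ) → ℝ) (q : Pt n) : (gmat F q)⁻¹ = ginv F q := by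
  apply Matrix.inv_eq_right_inv
  ext a b
  rw [Matrix.mul_apply, sum_Idx (f := fun m => gmat F q a m * ginv F q m b)]
  rcases a with (⟨⟩|i)|(⟨⟩|i) <;> rcases b with (⟨⟩|j)|(⟨⟩|j) <;>
    simp [gmat, ginv, jX, jXs, jZ, jZs, Matrix.one_apply, Finset.sum_ite_eq,
      Finset.sum_ite_eq']

end S18
namespace S18
variable {n : ℕ}

/-- derivative of F in direction of an Idx -/
noncomputable def dF (F : (Fin n → ℝ) → ℝ) (q : Pt n) : Idx n → ℝ :=
  fun a => match a with
    | Sum.inl (Sum.inr i) => pdS i F (sPart q)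
    | _ => 0

lemma pd_gmat (F : (Fin n → ℝ) → ℝ) (hF : ContDiff ℝ (⊤ : ℕ∞) F) (a b c : Idx n) (q : Pt n) :
    pd a (fun r => gmat F r b c) q
      = (match b, c with
          | Sum.inl (Sum.inl _), Sum.inl (Sum.inl _) => -2 * dF F q a
          | _, _ => 0) := by
  have hd : DifferentiableAt ℝ F (sPart q) := (hF.differentiable (by simp)).differentiableAt
  rcases b with (⟨⟩|i)|(⟨⟩|i) <;> rcases c with (⟨⟩|j)|(⟨⟩|j)
  any_goals solve | (simp only [gmat]; simp [pd_const])
  rw [show (fun r => gmat F r (Sum.inl (Sum.inl ())) (Sum.inl (Sum.inl ())))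
        = fun r : Pt n => (-2:ℝ) * F (sPart r) from by funext r; simp [gmat]; try ring]
  rw [pd_cmul_comp a (-2) F q hd]
  rcases a with (⟨⟩|u)|(⟨⟩|u) <;> simp [dF] <;> try ring

noncomputable def GammaE (F : (Fin n → ℝ) → ℝ) (l i j : Idx n) (q : Pt n) : ℝ :=
  match l, i, j with
  | Sum.inr (Sum.inl _), Sum.inl (Sum.inl _), Sum.inl (Sum.inr s) => -pdS s F (sPart q)
  | Sum.inr (Sum.inl _), Sum.inl (Sum.inr s), Sum.inl (Sum.inl _) => -pdS s F (sPart q)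
  | Sum.inr (Sum.inr s), Sum.inl (Sum.inl _), Sum.inl (Sum.inl _) => pdS s F (sPart q)
  | _, _, _ => 0

lemma Gamma2_eq (F : (Fin n → ℝ) → ℝ) (hF : ContDiff ℝ (⊤ : ℕ∞) F) (l i j : Idx n) (q : Pt n) :
    Gamma2 F l i j q = GammaE F l i j q := by
  rw [Gamma2, gmat_inv]
  rw [Finset.sum_congr rfl (fun m _ => by rw [pd_gmat F hF i j m q, pd_gmat F hF j i m q,
    pd_gmat F hF m i j q])]
  rw [sum_Idx]
  rcases l with (⟨⟩|t)|(⟨⟩|t) <;> rcases i with (⟨⟩|u)|(⟨⟩|u) <;> rcases j with (⟨⟩|v)|(⟨⟩|v) <;>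
    simp [ginv, GammaE, dF, jX, jXs, jZ, jZs, Finset.sum_ite_eq, Finset.sum_ite_eq',
      mul_comm, mul_assoc] <;> ring

end S18
namespace S18
variable {n : ℕ}

lemma pdS_comm {F : (Fin n → ℝ) → ℝ} (hF : ContDiff ℝ (⊤ : ℕ∞) F) (t s : Fin n) (x : Fin n → ℝ) :
    pdS t (pdS s F) x = pdS s (pdS t F) x := by
  have hd : DifferentiableAt ℝ (fderiv ℝ F) x :=
    ((hF.fderiv_right (m := 1) (WithTop.coe_le_coe.mpr le_top)).differentiable (by simp)).differentiableAt
  have key : ∀ v w : Fin n → ℝ,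
      fderiv ℝ (fun y => fderiv ℝ F y v) x w = fderiv ℝ (fderiv ℝ F) x w v := by
    intro v w
    rw [fderiv_clm_apply hd (differentiableAt_const v)]
    simp
  have hsymm := (hF.contDiffAt (x := x)).isSymmSndFDerivAt (by simp [minSmoothness_of_isRCLikeNormedField]; exact WithTop.coe_le_coe.mpr le_top)
  unfold pdS
  rw [key, key, hsymm]
end S18
namespace S18
variable {n : ℕ}

lemma GammaE_upperL (F : (Fin n → ℝ) → ℝ) (w : Unit ⊕ Fin n) (i j : Idx n) (q : Pt n) :
    GammaE F (Sum.inl w) i j q = 0 := by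
  rcases w with ⟨⟩|w <;> rcases i with (⟨⟩|u)|(⟨⟩|u) <;> rcases j with (⟨⟩|v)|(⟨⟩|v) <;> rfl

lemma GammaE_lowerR (F : (Fin n → ℝ) → ℝ) (l i : Idx n) (w : Unit ⊕ Fin n) (q : Pt n) :
    GammaE F l i (Sum.inr w) q = 0 := by
  rcases w with ⟨⟩|w <;> rcases i with (⟨⟩|u)|(⟨⟩|u) <;> rcases l with (⟨⟩|v)|(⟨⟩|v) <;> rfl

/-- directional second derivative -/
noncomputable def dd (F : (Fin n → ℝ) → ℝ) (q : Pt n) (a : Idx n) (s : Fin n) : ℝ :=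
  match a with
  | Sum.inl (Sum.inr u) => pdS u (pdS s F) (sPart q)
  | _ => 0

noncomputable def dGE (F : (Fin n → ℝ) → ℝ) (q : Pt n) (a m j k : Idx n) : ℝ :=
  match m, j, k with
  | Sum.inr (Sum.inl _), Sum.inl (Sum.inl _), Sum.inl (Sum.inr s) => -(dd F q a s)
  | Sum.inr (Sum.inl _), Sum.inl (Sum.inr s), Sum.inl (Sum.inl _) => -(dd F q a s)
  | Sum.inr (Sum.inr s), Sum.inl (Sum.inl _), Sum.inl (Sum.inl _) => dd F q a s
  | _, _, _ => 0

lemma dGE_inl (F : (Fin n → ℝ) → ℝ) (q : Pt n) (a : Idx n) (w : Unit ⊕ Fin n) (j k : Idx n) :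
    dGE F q a (Sum.inl w) j k = 0 := by
  rcases w with ⟨⟩|w <;> rcases j with (⟨⟩|u)|(⟨⟩|u) <;> rcases k with (⟨⟩|v)|(⟨⟩|v) <;> rfl

lemma pd_GammaE (F : (Fin n → ℝ) → ℝ) (hF : ContDiff ℝ (⊤ : ℕ∞) F) (a m j k : Idx n) (q : Pt n) :
    pd a (fun r => GammaE F m j k r) q = dGE F q a m j k := by
  have hd : ∀ s : Fin n, DifferentiableAt ℝ (pdS s F) (sPart q) :=
    fun s => ((contDiff_pdS hF s).differentiable (by simp)).differentiableAt
  have hneg : ∀ (s : Fin n), pd a (fun r => -pdS s F (sPart r)) q = -(dd F q a s) := by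
    intro s
    have : (fun r : Pt n => -pdS s F (sPart r)) = fun r => -((fun y => pdS s F y) (sPart r)) := rfl
    rw [this]
    have h2 : pd a (fun r : Pt n => -((fun y => pdS s F y) (sPart r))) q
        = -(pd a (fun r : Pt n => pdS s F (sPart r)) q) := by
      simp [pd, fderiv_neg]
    rw [h2, pd_comp_sPart a (pdS s F) q (hd s)]
    rcases a with (⟨⟩|u)|(⟨⟩|u) <;> simp [dd]
  have hpos : ∀ (s : Fin n), pd a (fun r => pdS s F (sPart r)) q = dd F q a s := by
    intro s
    rw [pd_comp_sPart a (pdS s F) q (hd s)]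
    rcases a with (⟨⟩|u)|(⟨⟩|u) <;> simp [dd]
  rcases m with (⟨⟩|u)|(⟨⟩|u) <;> rcases j with (⟨⟩|v)|(⟨⟩|v) <;>
    rcases k with (⟨⟩|w)|(⟨⟩|w) <;>
    simp only [GammaE, dGE] <;>
    first
      | exact pd_const a 0 q
      | exact hneg _
      | exact hpos _

def baseCoef : Idx n → Idx n → Idx n → Idx n → Option (ℝ × Fin n × Fin n)
  | Sum.inl (Sum.inl _), Sum.inl (Sum.inr t), Sum.inl (Sum.inr s), Sum.inl (Sum.inl _) =>
      some (1, t, s)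
  | Sum.inl (Sum.inr t), Sum.inl (Sum.inl _), Sum.inl (Sum.inr s), Sum.inl (Sum.inl _) =>
      some (-1, t, s)
  | Sum.inl (Sum.inl _), Sum.inl (Sum.inr t), Sum.inl (Sum.inl _), Sum.inl (Sum.inr s) =>
      some (-1, t, s)
  | Sum.inl (Sum.inr t), Sum.inl (Sum.inl _), Sum.inl (Sum.inl _), Sum.inl (Sum.inr s) =>
      some (1, t, s)
  | _, _, _, _ => none

lemma R4_eq (F : (Fin n → ℝ) → ℝ) (hF : ContDiff ℝ (⊤ : ℕ∞) F) (q : Pt n) (i j k l : Idx n) :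
    R4 F q i j k l = (match baseCoef i j k l with
      | some (c, t, s) => c * pdS t (pdS s F) (sPart q)
      | none => 0) := by
  have hG : ∀ (m a b : Idx n), (fun r => Gamma2 F m a b r) = fun r => GammaE F m a b r :=
    fun m a b => funext (fun r => Gamma2_eq F hF m a b r)
  have hGG : ∀ m : Idx n, (∑ a : Idx n, (Gamma2 F m i a q * Gamma2 F a j k q
      - Gamma2 F m j a q * Gamma2 F a i k q)) = 0 := by
    intro m
    apply Finset.sum_eq_zero
    intro a _
    rcases a with (w|w) <;>
      simp only [Gamma2_eq F hF, GammaE_upperL, GammaE_lowerR] <;> ring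
  have hR : R4 F q i j k l = ∑ m : Idx n, gmat F q l m * (dGE F q i m j k - dGE F q j m i k) := by
    rw [R4]
    apply Finset.sum_congr rfl
    intro m _
    rw [hGG, hG, hG, pd_GammaE F hF, pd_GammaE F hF]
    ring
  rw [hR, sum_Idx (f := fun m => gmat F q l m * (dGE F q i m j k - dGE F q j m i k))]
  rcases l with (⟨⟩|t)|(⟨⟩|t) <;>
    rcases i with (⟨⟩|ti)|(⟨⟩|ti) <;> rcases j with (⟨⟩|tj)|(⟨⟩|tj) <;>
    rcases k with (⟨⟩|tk)|(⟨⟩|tk) <;>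
    simp [gmat, jX, jXs, jZ, jZs, dGE, dGE_inl, dd, baseCoef,
      Finset.sum_ite_eq, Finset.sum_ite_eq', mul_comm] <;>
    try (rw [pdS_comm hF]; ring)

end S18
namespace S18
variable {n : ℕ}

def unS : Idx n → Option (Fin n)
  | Sum.inl (Sum.inr i) => some i
  | _ => none

def unSList : List (Idx n) → Option (List (Fin n))
  | [] => some []
  | a :: L => match unS a, unSList L with
      | some u, some L' => some (u :: L')
      | _, _ => none

lemma unSList_cons_jZ (u : Fin n) (L : List (Idx n)) :
    unSList (jZ u :: L) = (unSList L).map (fun L' => u :: L') := by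
  rcases h : unSList L with _ | L' <;> simp [unSList, unS, jZ, h]

lemma unSList_cons_not (a : Idx n) (ha : unS a = none) (L : List (Idx n)) :
    unSList (a :: L) = none := by
  rcases h : unSList L with _ | L' <;> simp [unSList, ha, h]

/-- The model for the k-th covariant derivative of R. -/
noncomputable def model (F : (Fin n → ℝ) → ℝ) (k : ℕ) (q : Pt n)
    (v : Fin (k+4) → Idx n) : ℝ :=
  match baseCoef (v ⟨0, by omega⟩) (v ⟨1, by omega⟩) (v ⟨2, by omega⟩) (v ⟨3, by omega⟩),
    unSList ((List.ofFn (fun r : Fin k => v ⟨r.val + 4, by omega⟩)).reverse) with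
  | some (c, t, s), some L => c * iterPdS (L ++ [t, s]) F (sPart q)
  | _, _ => 0

lemma model_fun (F : (Fin n → ℝ) → ℝ) (k : ℕ) (v : Fin (k+4) → Idx n) :
    (fun q => model F k q v)
      = match baseCoef (v ⟨0, by omega⟩) (v ⟨1, by omega⟩) (v ⟨2, by omega⟩) (v ⟨3, by omega⟩),
          unSList ((List.ofFn (fun r : Fin k => v ⟨r.val + 4, by omega⟩)).reverse) with
        | some (c, t, s), some L => (fun q => c * iterPdS (L ++ [t, s]) F (sPart q))
        | _, _ => (fun _ => 0) := by
  rcases hb : baseCoef (v ⟨0, by omega⟩) (v ⟨1, by omega⟩) (v ⟨2, by omega⟩) (v ⟨3, by omega⟩)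
    with _ | ⟨c, t, s⟩ <;>
    rcases hu : unSList ((List.ofFn (fun r : Fin k => v ⟨r.val + 4, by omega⟩)).reverse)
      with _ | L <;>
    · funext q
      rw [model, hb, hu]

lemma baseCoef_starred (a b c d : Idx n)
    (h : (∃ w, a = Sum.inr w) ∨ (∃ w, b = Sum.inr w) ∨ (∃ w, c = Sum.inr w)
        ∨ (∃ w, d = Sum.inr w)) :
    baseCoef a b c d = none := by
  rcases a with (⟨⟩|u)|(⟨⟩|u) <;> rcases b with (⟨⟩|u')|(⟨⟩|u') <;>
    rcases c with (⟨⟩|u'')|(⟨⟩|u'') <;> rcases d with (⟨⟩|u''')|(⟨⟩|u''') <;>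
    first | rfl | (exfalso; rcases h with ⟨w,hw⟩|⟨w,hw⟩|⟨w,hw⟩|⟨w,hw⟩ <;> simp at hw)

/-- model vanishes when some slot is starred -/
lemma model_starred (F : (Fin n → ℝ) → ℝ) (k : ℕ) (q : Pt n) (v : Fin (k+4) → Idx n)
    (a0 : Fin (k+4)) (w : Unit ⊕ Fin n) (hw : v a0 = Sum.inr w) :
    model F k q v = 0 := by
  rcases lt_or_ge a0.val 4 with h4 | h4
  · have hb : baseCoef (v ⟨0, by omega⟩) (v ⟨1, by omega⟩) (v ⟨2, by omega⟩) (v ⟨3, by omega⟩)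
        = none := by
      apply baseCoef_starred
      interval_cases h : a0.val
      · left; exact ⟨w, by rw [← hw]; congr 1; exact Fin.ext (by simp; omega)⟩
      · right; left; exact ⟨w, by rw [← hw]; congr 1; exact Fin.ext (by simp; omega)⟩
      · right; right; left; exact ⟨w, by rw [← hw]; congr 1; exact Fin.ext (by simp; omega)⟩
      · right; right; right; exact ⟨w, by rw [← hw]; congr 1; exact Fin.ext (by simp; omega)⟩
    rw [model, hb]
  · have hmem : (Sum.inr w : Idx n) ∈ (List.ofFn (fun r : Fin k => v ⟨r.val + 4, by omega⟩)) := by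
      rw [List.mem_ofFn]
      refine ⟨⟨a0.val - 4, by omega⟩, ?_⟩
      simp only
      rw [← hw]
      congr 1
      exact Fin.ext (by simp; omega)
    have hu : unSList ((List.ofFn (fun r : Fin k => v ⟨r.val + 4, by omega⟩)).reverse)
        = none := by
      generalize hL : (List.ofFn (fun r : Fin k => v ⟨r.val + 4, by omega⟩)) = L at hmem
      rw [← List.mem_reverse] at hmem
      generalize L.reverse = L' at hmem
      clear hL
      induction L' with
      | nil => simp at hmem
      | cons x L' ih =>
        rcases List.mem_cons.mp hmem with h | h
        · rw [← h, unSList_cons_not]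
          rfl
        · rcases hx : unSList (x :: L') with _ | L'' 
          · rfl
          · exfalso
            have := ih h
            rw [unSList] at hx
            rcases h1 : unS x with _|u <;> rw [h1] at hx
            · simp at hx
            · rw [this] at hx; simp at hx
    rcases hb : baseCoef (v ⟨0, by omega⟩) (v ⟨1, by omega⟩) (v ⟨2, by omega⟩) (v ⟨3, by omega⟩)
      with _ | ⟨c, t, s⟩ <;> rw [model, hb, hu]

end S18
namespace S18
variable {n : ℕ}

lemma unSList_tail_none (a : Idx n) (L : List (Idx n)) (hL : unSList L = none) :
    unSList (a :: L) = none := by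
  rcases h : unS a with _ | u <;> simp [unSList, h, hL]

theorem covDIter_eq_model (F : (Fin n → ℝ) → ℝ) (hF : ContDiff ℝ (⊤ : ℕ∞) F) :
    ∀ (k : ℕ) (q : Pt n) (v : Fin (k+4) → Idx n), covDIter F k q v = model F k q v := by
  intro k
  induction k with
  | zero =>
    intro q v
    simp only [covDIter]
    rw [R4_eq F hF]
    have h0 : (⟨0, by omega⟩ : Fin (0+4)) = 0 := by decide
    have h1 : (⟨1, by omega⟩ : Fin (0+4)) = 1 := by decide
    have h2 : (⟨2, by omega⟩ : Fin (0+4)) = 2 := by decide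
    have h3 : (⟨3, by omega⟩ : Fin (0+4)) = 3 := by decide
    rw [model, h0, h1, h2, h3]
    rcases hb : baseCoef (v 0) (v 1) (v 2) (v 3) with _ | ⟨c, t, s⟩ <;> rfl
  | succ k ih =>
    intro q v
    have hIH : covDIter F k = model F k := by
      funext q' v'
      exact ih q' v'
    show covD F (covDIter F k) q v = model F (k+1) q v
    rw [covD, hIH]
    -- corrections vanish
    have hcorr : (∑ a : Fin (k+4), ∑ l : Idx n,
        Gamma2 F l (v (Fin.last (k+4))) (v a.castSucc) q *
          model F k q (Function.update (fun b => v b.castSucc) a l)) = 0 := by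
      apply Finset.sum_eq_zero; intro a _
      apply Finset.sum_eq_zero; intro l _
      rcases l with (w | w)
      · rw [Gamma2_eq F hF, GammaE_upperL, zero_mul]
      · rw [model_starred F k q _ a w (by simp), mul_zero]
    rw [hcorr, sub_zero]
    -- the list decomposition
    have e2 : (List.ofFn (fun r : Fin (k+1) => v ⟨r.val + 4, by omega⟩)).reverse
        = v (Fin.last (k+4))
          :: (List.ofFn (fun r : Fin k =>
                (fun b : Fin (k+4) => v b.castSucc) ⟨r.val + 4, by omega⟩)).reverse := by
      rw [List.ofFn_succ' (fun r : Fin (k+1) => v ⟨r.val + 4, by omega⟩)]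
      rw [List.concat_eq_append, List.reverse_append]
      rfl
    -- compute both sides by cases
    rw [model_fun F k (fun b => v b.castSucc)]
    rcases hb : baseCoef ((fun b : Fin (k+4) => v b.castSucc) ⟨0, by omega⟩)
        ((fun b : Fin (k+4) => v b.castSucc) ⟨1, by omega⟩)
        ((fun b : Fin (k+4) => v b.castSucc) ⟨2, by omega⟩)
        ((fun b : Fin (k+4) => v b.castSucc) ⟨3, by omega⟩) with _ | ⟨c, t, s⟩
    · -- baseCoef none
      have hb' : baseCoef (v ⟨0, by omega⟩) (v ⟨1, by omega⟩) (v ⟨2, by omega⟩)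
          (v ⟨3, by omega⟩) = none := hb
      rw [model, hb']
      simpa using pd_const (v (Fin.last (k+4))) 0 q
    · have hb' : baseCoef (v ⟨0, by omega⟩) (v ⟨1, by omega⟩) (v ⟨2, by omega⟩)
          (v ⟨3, by omega⟩) = some (c, t, s) := hb
      rcases hu : unSList ((List.ofFn (fun r : Fin k =>
          (fun b : Fin (k+4) => v b.castSucc) ⟨r.val + 4, by omega⟩)).reverse) with _ | L
      · -- tail list bad
        have hu' : unSList ((List.ofFn (fun r : Fin (k+1) => v ⟨r.val + 4, by omega⟩)).reverse)
            = none := by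
          rw [e2]; exact unSList_tail_none _ _ hu
        rw [model, hb', hu']
        simpa using pd_const (v (Fin.last (k+4))) 0 q
      · -- good tail; case on the new direction
        have hdiff : DifferentiableAt ℝ (iterPdS (L ++ [t, s]) F) (sPart q) :=
          ((contDiff_iterPdS hF _).differentiable (by simp)).differentiableAt
        rw [pd_cmul_comp _ c _ q hdiff]
        rcases hlast : v (Fin.last (k+4)) with (⟨⟩ | u) | w
        · -- x direction : zero
          have hu' : unSList ((List.ofFn (fun r : Fin (k+1) => v ⟨r.val + 4, by omega⟩)).reverse)
              = none := by
            rw [e2, hlast]; exact unSList_cons_not _ (by rfl) _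
          rw [model, hb', hu']
          simp
        · -- z direction
          have hu' : unSList ((List.ofFn (fun r : Fin (k+1) => v ⟨r.val + 4, by omega⟩)).reverse)
              = some (u :: L) := by
            rw [e2, hlast]
            rw [show (Sum.inl (Sum.inr u) : Idx n) = jZ u from rfl, unSList_cons_jZ, hu]
            rfl
          rw [model, hb', hu']
          rfl
        · -- starred direction : zero
          have hu' : unSList ((List.ofFn (fun r : Fin (k+1) => v ⟨r.val + 4, by omega⟩)).reverse)
              = none := by
            rw [e2, hlast]
            apply unSList_cons_not
            rcases w with ⟨⟩ | w <;> rfl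
          rw [model, hb', hu']
          simp

end S18
namespace S18
variable {n : ℕ}

def evalMon (M : List (Fin n)) (s : Fin n → ℝ) : ℝ := (M.map s).prod
def evalP (P : List (ℝ × List (Fin n))) (s : Fin n → ℝ) : ℝ :=
  (P.map (fun cm => cm.1 * evalMon cm.2 s)).sum

def dMon (i : Fin n) : List (Fin n) → List (ℝ × List (Fin n))
  | [] => []
  | a :: M => (if a = i then [((1:ℝ), M)] else [])
      ++ (dMon i M).map (fun cm => (cm.1, a :: cm.2))
def dPoly (i : Fin n) (P : List (ℝ × List (Fin n))) : List (ℝ × List (Fin n)) :=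
  P.flatMap (fun cm => (dMon i cm.2).map (fun dm => (cm.1 * dm.1, dm.2)))
def dListP : List (Fin n) → List (ℝ × List (Fin n)) → List (ℝ × List (Fin n))
  | [], P => P
  | a :: L, P => dPoly a (dListP L P)

lemma evalMon_cons (a : Fin n) (M : List (Fin n)) (s : Fin n → ℝ) :
    evalMon (a :: M) s = s a * evalMon M s := by simp [evalMon]
lemma evalP_nil (s : Fin n → ℝ) : evalP [] s = 0 := rfl
lemma evalP_cons (cm : ℝ × List (Fin n)) (P : List (ℝ × List (Fin n))) (s : Fin n → ℝ) :
    evalP (cm :: P) s = cm.1 * evalMon cm.2 s + evalP P s := by simp [evalP]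
lemma evalP_append (P Q : List (ℝ × List (Fin n))) (s : Fin n → ℝ) :
    evalP (P ++ Q) s = evalP P s + evalP Q s := by simp [evalP]
lemma evalP_map_cons (a : Fin n) (Q : List (ℝ × List (Fin n))) (s : Fin n → ℝ) :
    evalP (Q.map (fun cm => (cm.1, a :: cm.2))) s = s a * evalP Q s := by
  induction Q with
  | nil => simp [evalP]
  | cons cm Q ih =>
    simp only [List.map_cons, evalP_cons, ih, evalMon_cons]
    ring
lemma evalP_map_scale (c : ℝ) (Q : List (ℝ × List (Fin n))) (s : Fin n → ℝ) :
    evalP (Q.map (fun dm => (c * dm.1, dm.2))) s = c * evalP Q s := by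
  induction Q with
  | nil => simp [evalP]
  | cons cm Q ih =>
    simp only [List.map_cons, evalP_cons, ih]
    ring

lemma contDiff_evalMon (M : List (Fin n)) : ContDiff ℝ (⊤ : ℕ∞) (evalMon M) := by
  induction M with
  | nil => exact contDiff_const
  | cons a M ih =>
    have : evalMon (a :: M) = fun s => s a * evalMon M s := by
      funext s; exact evalMon_cons a M s
    rw [this]
    exact ((ContinuousLinearMap.proj a : (Fin n → ℝ) →L[ℝ] ℝ).contDiff).mul ih

lemma contDiff_evalP (P : List (ℝ × List (Fin n))) : ContDiff ℝ (⊤ : ℕ∞) (evalP P) := by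
  induction P with
  | nil => exact contDiff_const
  | cons cm P ih =>
    have : evalP (cm :: P) = fun s => cm.1 * evalMon cm.2 s + evalP P s := by
      funext s; exact evalP_cons cm P s
    rw [this]
    exact (contDiff_const.mul (contDiff_evalMon cm.2)).add ih

lemma pdS_proj (i a : Fin n) : pdS i (fun s => s a) = fun _ => if a = i then 1 else 0 := by
  funext s
  rw [pdS, show (fun s : Fin n → ℝ => s a) = (ContinuousLinearMap.proj a : (Fin n → ℝ) →L[ℝ] ℝ)
    from rfl, ContinuousLinearMap.fderiv]
  simp [Pi.single_apply]

lemma pdS_evalMon (i : Fin n) (M : List (Fin n)) :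
    pdS i (evalMon M) = evalP (dMon i M) := by
  induction M with
  | nil =>
    funext s
    rw [show evalMon (n := n) [] = fun _ => (1:ℝ) from rfl]
    simp [pdS, evalP, dMon]
  | cons a M ih =>
    funext s
    have hsplit : evalMon (a :: M) = fun s => (fun s' : Fin n → ℝ => s' a) s * evalMon M s := by
      funext s; exact evalMon_cons a M s
    rw [hsplit, pdS]
    have hproj : DifferentiableAt ℝ (fun s' : Fin n → ℝ => s' a) s :=
      (ContinuousLinearMap.proj a : (Fin n → ℝ) →L[ℝ] ℝ).differentiableAt
    rw [fderiv_fun_mul hproj (((contDiff_evalMon M).differentiable (by simp)).differentiableAt)]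
    have h1 : fderiv ℝ (fun s' : Fin n → ℝ => s' a) s (Pi.single i 1) = if a = i then 1 else 0 := by
      have := congrFun (pdS_proj i a) s
      rw [pdS] at this
      exact this
    have h2 : fderiv ℝ (evalMon M) s (Pi.single i 1) = evalP (dMon i M) s := by
      have := congrFun ih s
      rw [pdS] at this
      exact this
    simp only [ContinuousLinearMap.add_apply, ContinuousLinearMap.smul_apply, smul_eq_mul]
    rw [h1, h2]
    rw [show dMon i (a :: M) = (if a = i then [((1:ℝ), M)] else [])
      ++ (dMon i M).map (fun cm => (cm.1, a :: cm.2)) from rfl]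
    rw [evalP_append, evalP_map_cons]
    by_cases hai : a = i <;> simp [hai, evalP_cons, evalP_nil, evalMon] <;> ring

lemma pdS_evalP (i : Fin n) (P : List (ℝ × List (Fin n))) :
    pdS i (evalP P) = evalP (dPoly i P) := by
  induction P with
  | nil =>
    funext s
    rw [show evalP (n := n) [] = fun _ => (0:ℝ) from rfl]
    simp [pdS, dPoly, evalP]
  | cons cm P ih =>
    funext s
    have hsplit : evalP (cm :: P) = fun s => cm.1 * evalMon cm.2 s + evalP P s := by
      funext s; exact evalP_cons cm P s
    rw [hsplit, pdS, fderiv_fun_add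
        (by exact (contDiff_const.mul (contDiff_evalMon cm.2)).differentiable (by simp) |>.differentiableAt)
        (by exact ((contDiff_evalP P).differentiable (by simp)).differentiableAt)]
    rw [fderiv_const_mul (((contDiff_evalMon cm.2).differentiable (by simp)).differentiableAt)]
    have h2 : fderiv ℝ (evalMon cm.2) s (Pi.single i 1) = evalP (dMon i cm.2) s := by
      have := congrFun (pdS_evalMon i cm.2) s
      rw [pdS] at this; exact this
    have h3 : fderiv ℝ (evalP P) s (Pi.single i 1) = evalP (dPoly i P) s := by
      have := congrFun ih s
      rw [pdS] at this; exact this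
    simp only [ContinuousLinearMap.add_apply, ContinuousLinearMap.smul_apply, smul_eq_mul]
    rw [h2, h3]
    rw [show dPoly i (cm :: P) = (dMon i cm.2).map (fun dm => (cm.1 * dm.1, dm.2)) ++ dPoly i P
      from rfl]
    rw [evalP_append, evalP_map_scale]

lemma iterPdS_evalP (L : List (Fin n)) (P : List (ℝ × List (Fin n))) :
    iterPdS L (evalP P) = evalP (dListP L P) := by
  induction L with
  | nil => rfl
  | cons a L ih =>
    rw [iterPdS_cons, ih, pdS_evalP]
    rfl

def monLe (d : ℕ) (P : List (ℝ × List (Fin n))) : Prop := ∀ cm ∈ P, cm.2.length ≤ d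

lemma dMon_len (i : Fin n) (M : List (Fin n)) :
    ∀ dm ∈ dMon i M, dm.2.length + 1 = M.length := by
  induction M with
  | nil => simp [dMon]
  | cons a M ih =>
    intro dm hdm
    rw [dMon, List.mem_append] at hdm
    rcases hdm with h | h
    · rcases (by by_cases hai : a = i <;> simp [hai] at h <;> try exact h :
        dm = ((1:ℝ), M)) with rfl
      simp
    · rcases List.mem_map.mp h with ⟨cm, hcm, rfl⟩
      simp [← ih cm hcm]

lemma monLe_dPoly (i : Fin n) (P : List (ℝ × List (Fin n))) (d : ℕ) (h : monLe d P) :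
    monLe (d - 1) (dPoly i P) := by
  intro cm hcm
  rcases List.mem_flatMap.mp hcm with ⟨bm, hbm, hmem⟩
  rcases List.mem_map.mp hmem with ⟨dm, hdm, rfl⟩
  have := dMon_len i bm.2 dm hdm
  have := h bm hbm
  simp; omega

lemma dPoly_nilmon (i : Fin n) (P : List (ℝ × List (Fin n))) (h : monLe 0 P) :
    dPoly i P = [] := by
  induction P with
  | nil => rfl
  | cons cm P ih =>
    have h2 : cm.2 = [] := List.length_eq_zero_iff.mp (Nat.le_zero.mp (h cm (by simp)))
    rw [dPoly, List.flatMap_cons, h2]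
    rw [show dMon i [] = [] from rfl]
    simp only [List.map_nil, List.nil_append]
    exact ih (fun bm hbm => h bm (by simp [hbm]))

lemma monLe_dListP (L : List (Fin n)) (P : List (ℝ × List (Fin n))) (d : ℕ) (h : monLe d P) :
    monLe (d - L.length) (dListP L P) := by
  induction L with
  | nil => simpa [dListP] using h
  | cons a L ih =>
    have h2 := monLe_dPoly a _ _ ih
    rw [show dListP (a :: L) P = dPoly a (dListP L P) from rfl]
    have : d - (a :: L).length = d - L.length - 1 := by rw [List.length_cons]; omega
    rw [this]
    exact h2

lemma dListP_nil_of_long (L : List (Fin n)) (P : List (ℝ × List (Fin n))) (d : ℕ)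
    (h : monLe d P) (hlen : d < L.length) : dListP L P = [] := by
  induction L with
  | nil => simp at hlen
  | cons a L ih =>
    simp only [List.length_cons] at hlen
    rw [show dListP (a :: L) P = dPoly a (dListP L P) from rfl]
    rcases lt_or_ge d L.length with h' | h'
    · rw [ih h']; rfl
    · have := monLe_dListP L P d h
      have h0 : d - L.length = 0 := by omega
      rw [h0] at this
      exact dPoly_nilmon a _ this

end S18
namespace S18
variable {n : ℕ}

lemma pdS_comp_eval (g : ℝ → ℝ) (hg : Differentiable ℝ g) (a i : Fin n) :
    pdS i (fun s => g (s a)) = fun s => if a = i then deriv g (s a) else 0 := by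
  funext s
  have hcomp : (fun s : Fin n → ℝ => g (s a))
      = g ∘ (ContinuousLinearMap.proj a : (Fin n → ℝ) →L[ℝ] ℝ) := rfl
  rw [pdS, hcomp, fderiv_comp s (hg _)
    (ContinuousLinearMap.proj a : (Fin n → ℝ) →L[ℝ] ℝ).differentiableAt,
    ContinuousLinearMap.fderiv]
  simp only [ContinuousLinearMap.coe_comp', Function.comp_apply,
    ContinuousLinearMap.proj_apply, Pi.single_apply]
  by_cases hai : a = i
  · simp only [if_pos hai]
    exact fderiv_apply_one_eq_deriv
  · simp only [if_neg hai]
    exact (fderiv ℝ g (s a)).map_zero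

lemma iterPdS_psi (ψ : ℝ → ℝ) (hψ : ContDiff ℝ (⊤ : ℕ∞) ψ) (a : Fin n) (m : ℕ) (L : List (Fin n)) :
    iterPdS L (fun s => iteratedDeriv m ψ (s a))
      = fun s => if ∀ x ∈ L, x = a then iteratedDeriv (L.length + m) ψ (s a) else 0 := by
  induction L with
  | nil => funext s; simp [iterPdS]
  | cons b L ih =>
    rw [iterPdS_cons, ih]
    by_cases hL : ∀ x ∈ L, x = a
    · have h1 : (fun s : Fin n → ℝ => if ∀ x ∈ L, x = a
          then iteratedDeriv (L.length + m) ψ (s a) else 0)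
          = fun s => iteratedDeriv (L.length + m) ψ (s a) := by
        funext s; rw [if_pos hL]
      have hdiff : Differentiable ℝ (iteratedDeriv (L.length + m) ψ) :=
        hψ.differentiable_iteratedDeriv _ (by
          exact lt_of_le_of_ne (by exact_mod_cast le_top) (by exact_mod_cast ENat.coe_ne_top _))
      rw [h1, pdS_comp_eval _ hdiff a b]
      funext s
      by_cases hba : b = a
      · subst hba
        rw [if_pos rfl, if_pos (by
          intro x hx
          rcases List.mem_cons.mp hx with h | h
          · exact h
          · exact hL x h)]
        rw [← iteratedDeriv_succ]
        congr 1
        rw [List.length_cons]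
        omega
      · rw [if_neg (fun h => hba h.symm), if_neg (fun hall => hba (hall b (by simp)))]
    · have h1 : (fun s : Fin n → ℝ => if ∀ x ∈ L, x = a
          then iteratedDeriv (L.length + m) ψ (s a) else 0)
          = fun _ => (0:ℝ) := by
        funext s; rw [if_neg hL]
      rw [h1]
      funext s
      rw [if_neg (fun hall => hL (fun x hx => hall x (by simp [hx])))]
      simp [pdS, fderiv_const]

lemma pdS_add (f g : (Fin n → ℝ) → ℝ) (hf : ContDiff ℝ (⊤ : ℕ∞) f) (hg : ContDiff ℝ (⊤ : ℕ∞) g) (i : Fin n) :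
    pdS i (fun s => f s + g s) = fun s => pdS i f s + pdS i g s := by
  funext s
  rw [pdS, fderiv_fun_add ((hf.differentiable (by simp)).differentiableAt)
    ((hg.differentiable (by simp)).differentiableAt)]
  rfl

lemma iterPdS_add (f g : (Fin n → ℝ) → ℝ) (hf : ContDiff ℝ (⊤ : ℕ∞) f) (hg : ContDiff ℝ (⊤ : ℕ∞) g)
    (L : List (Fin n)) :
    iterPdS L (fun s => f s + g s) = fun s => iterPdS L f s + iterPdS L g s := by
  induction L with
  | nil => rfl
  | cons a L ih =>
    rw [iterPdS_cons, ih, pdS_add _ _ (contDiff_iterPdS hf L) (contDiff_iterPdS hg L)]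
    rfl

end S18

namespace S18

def P0 (p : ℕ) : List (ℝ × List (Fin (2+2*p))) :=
  ((List.finRange (p+1)).map (fun (j : Fin (p+1)) => ((if 1 ≤ (j:ℕ) then (1:ℝ) else 0),
      zI p j :: List.replicate ((j:ℕ)+1) (zI p 0))))
  ++ ((List.finRange (p+1)).map (fun (i : Fin (p+1)) => ((1:ℝ), [zI p i, ztI p i])))

lemma evalMon_replicate (m : ℕ) (b : Fin n) (s : Fin n → ℝ) :
    evalMon (List.replicate m b) s = (s b)^m := by
  simp [evalMon, List.map_replicate, List.prod_replicate]

lemma evalP_finRange (m : ℕ) (f : Fin m → ℝ × List (Fin n)) (s : Fin n → ℝ) :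
    evalP ((List.finRange m).map f) s = ∑ j : Fin m, (f j).1 * evalMon (f j).2 s := by
  rw [evalP, Fin.sum_univ_def, List.map_map]
  rfl

lemma FN_eq (p : ℕ) (ψ : ℝ → ℝ) :
    FN p ψ = fun s => ψ (s (zI p 0)) + evalP (P0 p) s := by
  funext s
  rw [FN, P0, evalP_append, evalP_finRange, evalP_finRange]
  have h1 : ∀ j : Fin (p+1),
      (if 1 ≤ (j:ℕ) then (1:ℝ) else 0) * evalMon (zI p j :: List.replicate ((j:ℕ)+1) (zI p 0)) s
      = (if 1 ≤ (j:ℕ) then s (zI p j) * (s (zI p 0)) ^ ((j:ℕ) + 1) else 0) := by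
    intro j
    rw [evalMon_cons, evalMon_replicate]
    by_cases h : 1 ≤ (j:ℕ) <;> simp [h]
  have h2 : ∀ i : Fin (p+1), (1:ℝ) * evalMon [zI p i, ztI p i] s = s (zI p i) * s (ztI p i) := by
    intro i
    simp [evalMon]
  rw [Finset.sum_congr rfl (fun j _ => h1 j), Finset.sum_congr rfl (fun i _ => h2 i)]
  ring

lemma monLe_P0 (p : ℕ) : monLe (p+2) (P0 p) := by
  intro cm hcm
  rw [P0, List.mem_append] at hcm
  rcases hcm with h | h <;> rcases List.mem_map.mp h with ⟨j, _, rfl⟩ <;> simp <;>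
    (have := j.isLt; omega)

lemma contDiff_psiPart (p : ℕ) (ψ : ℝ → ℝ) (hψ : ContDiff ℝ (⊤ : ℕ∞) ψ) :
    ContDiff ℝ (⊤ : ℕ∞) (fun s : Fin (2+2*p) → ℝ => ψ (s (zI p 0))) :=
  hψ.comp (ContinuousLinearMap.proj (zI p 0) :
    (Fin (2+2*p) → ℝ) →L[ℝ] ℝ).contDiff

theorem iterPdS_FN (p : ℕ) (ψ : ℝ → ℝ) (hψ : ContDiff ℝ (⊤ : ℕ∞) ψ)
    (L : List (Fin (2+2*p))) (hlen : p + 2 < L.length) (s : Fin (2+2*p) → ℝ) :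
    iterPdS L (FN p ψ) s
      = if ∀ x ∈ L, x = zI p 0 then iteratedDeriv L.length ψ (s (zI p 0)) else 0 := by
  rw [FN_eq]
  rw [iterPdS_add _ _ (contDiff_psiPart p ψ hψ) (contDiff_evalP (P0 p)) L]
  rw [show (fun s : Fin (2+2*p) → ℝ => ψ (s (zI p 0)))
      = fun s => iteratedDeriv 0 ψ (s (zI p 0)) from by simp [iteratedDeriv_zero]]
  rw [iterPdS_psi ψ hψ (zI p 0) 0 L, iterPdS_evalP,
    dListP_nil_of_long L (P0 p) (p+2) (monLe_P0 p) hlen]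
  simp [evalP_nil]

end S18
namespace S18
variable {n : ℕ}

lemma argv_0 (k : ℕ) (i j kk l : Idx n) (dirs : Fin k → Idx n) (h : 0 < k + 4) :
    argv k i j kk l dirs ⟨0, h⟩ = i := by simp [argv]
lemma argv_1 (k : ℕ) (i j kk l : Idx n) (dirs : Fin k → Idx n) (h : 1 < k + 4) :
    argv k i j kk l dirs ⟨1, h⟩ = j := by simp [argv]
lemma argv_2 (k : ℕ) (i j kk l : Idx n) (dirs : Fin k → Idx n) (h : 2 < k + 4) :
    argv k i j kk l dirs ⟨2, h⟩ = kk := by simp [argv]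
lemma argv_3 (k : ℕ) (i j kk l : Idx n) (dirs : Fin k → Idx n) (h : 3 < k + 4) :
    argv k i j kk l dirs ⟨3, h⟩ = l := by simp [argv]
lemma argv_dir (k : ℕ) (i j kk l : Idx n) (dirs : Fin k → Idx n) (r : Fin k)
    (h : r.val + 4 < k + 4) :
    argv k i j kk l dirs ⟨r.val + 4, h⟩ = dirs r := by
  rw [argv]
  rw [dif_neg (show ¬(r.val + 4 = 0) by omega), dif_neg (show ¬(r.val + 4 = 1) by omega),
    dif_neg (show ¬(r.val + 4 = 2) by omega), dif_neg (show ¬(r.val + 4 = 3) by omega)]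
  exact congrArg dirs (Fin.ext (show r.val + 4 - 4 = r.val by omega))

lemma model_argv (F : (Fin n → ℝ) → ℝ) (k : ℕ) (q : Pt n) (i j kk l : Idx n)
    (dirs : Fin k → Idx n) :
    model F k q (argv k i j kk l dirs)
      = match baseCoef i j kk l, unSList ((List.ofFn dirs).reverse) with
        | some (c, t, s), some L => c * iterPdS (L ++ [t, s]) F (sPart q)
        | _, _ => 0 := by
  rw [model]
  rw [argv_0, argv_1, argv_2, argv_3]
  have hdirs : (List.ofFn (fun r : Fin k => argv k i j kk l dirs ⟨r.val + 4, by omega⟩))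
      = List.ofFn dirs :=
    congrArg List.ofFn (funext fun r => argv_dir k i j kk l dirs r (by omega))
  try rw [hdirs]

lemma unS_eq_some (a : Idx n) (u : Fin n) (h : unS a = some u) : a = jZ u := by
  rcases a with (⟨⟩|w)|(⟨⟩|w) <;> simp [unS] at h <;> simp [jZ, h]

lemma unSList_length (M : List (Idx n)) (L : List (Fin n)) (h : unSList M = some L) :
    L.length = M.length := by
  induction M generalizing L with
  | nil => rw [unSList] at h; simp at h; simp [← h]
  | cons a M ih =>
    rw [unSList] at h
    rcases h1 : unS a with _ | u <;> rw [h1] at h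
    · simp at h
    · rcases h2 : unSList M with _ | L' <;> rw [h2] at h
      · simp at h
      · simp at h
        rw [← h]
        simp [ih L' h2]

lemma unSList_all (u : Fin n) (M : List (Idx n)) (L : List (Fin n)) (h : unSList M = some L)
    (hall : ∀ x ∈ L, x = u) : ∀ a ∈ M, a = jZ u := by
  induction M generalizing L with
  | nil => simp
  | cons a M ih =>
    rw [unSList] at h
    rcases h1 : unS a with _ | w <;> rw [h1] at h
    · simp at h
    · rcases h2 : unSList M with _ | L' <;> rw [h2] at h
      · simp at h
      · simp at h
        intro b hb
        rcases List.mem_cons.mp hb with rfl | hbM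
        · rw [unS_eq_some b w h1]
          have : w = u := hall w (by rw [← h]; simp)
          rw [this]
        · exact ih L' h2 (fun x hx => hall x (by rw [← h]; simp [hx])) b hbM

lemma baseCoef_some (a b c d : Idx n) (co : ℝ) (t s : Fin n)
    (h : baseCoef a b c d = some (co, t, s)) :
    ((a = jX ∧ b = jZ t) ∨ (a = jZ t ∧ b = jX))
      ∧ ((c = jZ s ∧ d = jX) ∨ (c = jX ∧ d = jZ s)) := by
  rcases a with (⟨⟩|u)|(⟨⟩|u) <;> rcases b with (⟨⟩|u')|(⟨⟩|u') <;>
    rcases c with (⟨⟩|u'')|(⟨⟩|u'') <;> rcases d with (⟨⟩|u''')|(⟨⟩|u''') <;>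
    simp [baseCoef, jX, jZ] at h ⊢ <;> tauto

lemma unSList_replicate (k : ℕ) (u : Fin n) :
    unSList (List.replicate k (jZ u)) = some (List.replicate k u) := by
  induction k with
  | zero => rfl
  | succ k ih => rw [List.replicate_succ, unSList_cons_jZ, ih, List.replicate_succ]; rfl

end S18

open S18

/-- for N_{6+4p,ψ} and k ≥ p+1, the only nonzero components of the
    k-th covariant derivative of the curvature *operator* are
    (∇_{∂_{z_0}})^k 𝓡(∂x,∂_{z_0})∂_{z_0} = ψ^{(k+2)}·∂_{x*} and
    (∇_{∂_{z_0}})^k 𝓡(∂x,∂_{z_0})∂x = -ψ^{(k+2)}·∂_{z*_0}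
    (together with the components forced by antisymmetry in the first two slots).
    The operator is obtained from ∇^k R by raising the fourth index with g⁻¹. -/
theorem stmt_18 (p : ℕ) (ψ : ℝ → ℝ) (hψ : ContDiff ℝ (⊤ : ℕ∞) ψ) (k : ℕ) (hk : p + 1 ≤ k)
    (q : Pt (2+2*p)) :
    -- value on (∂x, ∂z0) ∂z0 : the ∂_{x*}-component is ψ^{(k+2)}(z₀), others vanish
    (∀ l : Idx (2+2*p), (∑ m : Idx (2+2*p), (gmat (FN p ψ) q)⁻¹ l m *
        covDIter (FN p ψ) k q
          (argv k (iX _) (iS _ (zI p 0)) (iS _ (zI p 0)) m (fun _ => iS _ (zI p 0))))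
      = if l = (Sum.inr (Sum.inl ()) : Idx (2+2*p))
        then iteratedDeriv (k+2) ψ (q (iS _ (zI p 0))) else 0)
    -- value on (∂x, ∂z0) ∂x : the ∂_{z*_0}-component is -ψ^{(k+2)}(z₀), others vanish
    ∧ (∀ l : Idx (2+2*p), (∑ m : Idx (2+2*p), (gmat (FN p ψ) q)⁻¹ l m *
        covDIter (FN p ψ) k q
          (argv k (iX _) (iS _ (zI p 0)) (iX _) m (fun _ => iS _ (zI p 0))))
      = if l = (Sum.inr (Sum.inr (zI p 0)) : Idx (2+2*p))
        then -(iteratedDeriv (k+2) ψ (q (iS _ (zI p 0)))) else 0)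
    -- all other components of ∇^k 𝓡 vanish
    ∧ (∀ (i j kk : Idx (2+2*p)) (dirs : Fin k → Idx (2+2*p)) (l : Idx (2+2*p)),
        ¬(((i = iX _ ∧ j = iS _ (zI p 0)) ∨ (i = iS _ (zI p 0) ∧ j = iX _))
            ∧ (kk = iX _ ∨ kk = iS _ (zI p 0))
            ∧ (∀ d, dirs d = iS _ (zI p 0))) →
        (∑ m : Idx (2+2*p), (gmat (FN p ψ) q)⁻¹ l m *
          covDIter (FN p ψ) k q (argv k i j kk m dirs)) = 0) := by
  have hF : ContDiff ℝ (⊤ : ℕ∞) (FN p ψ) := by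
    rw [FN_eq]
    exact (contDiff_psiPart p ψ hψ).add (contDiff_evalP (P0 p))
  have hco := covDIter_eq_model (FN p ψ) hF k
  refine ⟨?_, ?_, ?_⟩
  · -- part 1
    intro l
    have hmod : ∀ m : Idx (2+2*p),
        model (FN p ψ) k q (argv k (iX _) (iS _ (zI p 0)) (iS _ (zI p 0)) m
          (fun _ => iS _ (zI p 0)))
        = (match m with
            | Sum.inl (Sum.inl _) => iteratedDeriv (k+2) ψ (q (iS _ (zI p 0)))
            | _ => 0) := by
      intro m
      rw [model_argv]
      rw [show List.ofFn (fun _ : Fin k => iS (2+2*p) (zI p 0))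
            = List.replicate k (jZ (zI p 0)) from List.ofFn_const k _,
          List.reverse_replicate, unSList_replicate]
      rcases m with (⟨⟩|t)|(⟨⟩|t)
      · rw [show baseCoef (iX (2+2*p)) (iS _ (zI p 0)) (iS _ (zI p 0))
              (Sum.inl (Sum.inl ()) : Idx (2+2*p)) = some (1, zI p 0, zI p 0) from rfl]
        show (1:ℝ) * iterPdS (List.replicate k (zI p 0) ++ [zI p 0, zI p 0]) (FN p ψ) (sPart q)
          = iteratedDeriv (k+2) ψ (q (iS _ (zI p 0)))
        rw [show List.replicate k (zI p 0) ++ [zI p 0, zI p 0]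
              = List.replicate (k+2) (zI p 0) from by rw [List.replicate_add]; rfl]
        rw [iterPdS_FN p ψ hψ _ (by simp [List.length_replicate]; omega)]
        rw [if_pos (fun x hx => List.eq_of_mem_replicate hx)]
        simp only [List.length_replicate, one_mul]
        rfl
      · rfl
      · rfl
      · rfl
    rw [Finset.sum_congr rfl (fun m _ => by rw [gmat_inv, hco q _, hmod m])]
    rw [sum_Idx (f := fun m => ginv (FN p ψ) q l m * _)]
    rcases l with (⟨⟩|t)|(⟨⟩|t) <;> simp [ginv, jX, jXs, jZ, jZs]
  · -- part 2
    intro l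
    have hmod : ∀ m : Idx (2+2*p),
        model (FN p ψ) k q (argv k (iX _) (iS _ (zI p 0)) (iX _) m
          (fun _ => iS _ (zI p 0)))
        = (match m with
            | Sum.inl (Sum.inr t) => if t = zI p 0
                then -(iteratedDeriv (k+2) ψ (q (iS _ (zI p 0)))) else 0
            | _ => 0) := by
      intro m
      rw [model_argv]
      rw [show List.ofFn (fun _ : Fin k => iS (2+2*p) (zI p 0))
            = List.replicate k (jZ (zI p 0)) from List.ofFn_const k _,
          List.reverse_replicate, unSList_replicate]
      rcases m with (⟨⟩|t)|(⟨⟩|t)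
      · rfl
      · rw [show baseCoef (iX (2+2*p)) (iS _ (zI p 0)) (iX _)
              (Sum.inl (Sum.inr t) : Idx (2+2*p)) = some (-1, zI p 0, t) from rfl]
        show (-1:ℝ) * iterPdS (List.replicate k (zI p 0) ++ [zI p 0, t]) (FN p ψ) (sPart q)
          = (if t = zI p 0 then -(iteratedDeriv (k+2) ψ (q (iS _ (zI p 0)))) else 0)
        rw [iterPdS_FN p ψ hψ _ (by simp [List.length_append, List.length_replicate]; omega)]
        by_cases ht : t = zI p 0
        · rw [if_pos (by
            intro x hx
            rcases List.mem_append.mp hx with h | h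
            · exact List.eq_of_mem_replicate h
            · rcases (by simpa using h : x = zI p 0 ∨ x = t) with h' | h'
              · exact h'
              · rw [h', ht])]
          rw [if_pos ht]
          have hlen : (List.replicate k (zI p 0) ++ [zI p 0, t]).length = k + 2 := by
            simp [List.length_append, List.length_replicate]
          rw [hlen]
          show (-1:ℝ) * iteratedDeriv (k+2) ψ (q (iS _ (zI p 0)))
            = -(iteratedDeriv (k+2) ψ (q (iS _ (zI p 0))))
          ring
        · rw [if_neg (fun hall => ht (hall t (by simp))), if_neg ht, mul_zero]
      · rfl
      · rfl
    rw [Finset.sum_congr rfl (fun m _ => by rw [gmat_inv, hco q _, hmod m])]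
    rw [sum_Idx (f := fun m => ginv (FN p ψ) q l m * _)]
    rcases l with (⟨⟩|t)|(⟨⟩|t) <;>
      simp [ginv, jX, jXs, jZ, jZs, Finset.sum_ite_eq, Finset.sum_ite_eq'] <;>
      (try (by_cases h : t = zI p 0 <;> simp [h]))
  · -- part 3
    intro i j kk dirs l hngood
    have hz : ∀ m : Idx (2+2*p), model (FN p ψ) k q (argv k i j kk m dirs) = 0 := by
      intro m
      rw [model_argv]
      rcases hb : baseCoef i j kk m with _ | ⟨c, t, s⟩
      · rcases hu : unSList ((List.ofFn dirs).reverse) with _ | L <;> rfl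
      · rcases hu : unSList ((List.ofFn dirs).reverse) with _ | L
        · rfl
        · have hLlen : L.length = k := by
            have := unSList_length _ _ hu
            simpa using this
          have hlen : p + 2 < (L ++ [t, s]).length := by
            simp [List.length_append, hLlen]; omega
          show c * iterPdS (L ++ [t, s]) (FN p ψ) (sPart q) = 0
          rw [iterPdS_FN p ψ hψ _ hlen]
          by_cases hall : ∀ x ∈ L ++ [t, s], x = zI p 0
          · exfalso
            apply hngood
            have ht : t = zI p 0 := hall t (by simp)
            have hs : s = zI p 0 := hall s (by simp)
            have hbc := baseCoef_some i j kk m c t s hb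
            refine ⟨?_, ?_, ?_⟩
            · rcases hbc.1 with ⟨h1, h2⟩ | ⟨h1, h2⟩
              · left; exact ⟨h1, by rw [h2, ht]; rfl⟩
              · right; exact ⟨by rw [h1, ht]; rfl, h2⟩
            · rcases hbc.2 with ⟨h1, _⟩ | ⟨h1, _⟩
              · right; rw [h1, hs]; rfl
              · left; exact h1
            · intro d
              have hmem : dirs d ∈ (List.ofFn dirs).reverse := by
                rw [List.mem_reverse, List.mem_ofFn]
                exact ⟨d, rfl⟩
              exact unSList_all (zI p 0) _ _ hu
                (fun x hx => hall x (by simp [hx])) (dirs d) hmem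
          · rw [if_neg hall, mul_zero]
    rw [Finset.sum_congr rfl (fun m _ => by rw [gmat_inv, hco q _, hz m, mul_zero])]
    simp
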